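/- Let W be the set of pairs in M top-reducible by no element of G, assume W is nonempty and let ν < +∞ be the minimal valuation val(v) over (u,v) ∈ W. Then the set L = {LM(u) : (u,v) ∈ W, val(LM(v)) = ν} admits a minimal element for the term order. -/

import Mathlib

open MvPowerSeries

namespace TateStmt

variable {n : ℕ} {O : Type*} [CommRing O]

/-- The Tate condition: the (π-adic) valuations of the coefficients tend to infinity. -/
def IsTate (π : O) (f : MvPowerSeries (Fin n) O) : Prop :=
  ∀ N : ℕ, {i : Fin n →₀ ℕ | ¬ π ^ N ∣ MvPowerSeries.coeff i f}.Finite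

/-- The integral Tate algebra `K{X}°`, as a subring of the ring of formal power series
over the valuation ring `O = K°`. -/
def TateAlgebra (n : ℕ) (O : Type*) [CommRing O] (π : O) :
    Subring (MvPowerSeries (Fin n) O) where
  carrier := {f | IsTate π f}
  zero_mem' := by
    intro N
    apply Set.Finite.subset (Set.finite_empty)
    intro i hi
    exact hi (Dvd.intro 0 (by simp))
  one_mem' := by
    intro N
    apply Set.Finite.subset (Set.finite_singleton (0 : Fin n →₀ ℕ))
    intro i hi
    by_contra h
    rw [Set.mem_singleton_iff] at h
    apply hi
    rw [MvPowerSeries.coeff_one, if_neg h]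
    exact Dvd.intro 0 (by simp)
  add_mem' := by
    intro f g hf hg N
    apply Set.Finite.subset ((hf N).union (hg N))
    intro i hi
    by_contra h
    simp only [Set.mem_union, Set.mem_setOf_eq, not_or, not_not] at h
    exact hi (by rw [map_add]; exact dvd_add h.1 h.2)
  neg_mem' := by
    intro f hf N
    apply Set.Finite.subset (hf N)
    intro i hi
    by_contra h
    simp only [Set.mem_setOf_eq, not_not] at h
    exact hi (by rw [map_neg]; exact (dvd_neg).mpr h)
  mul_mem' := by
    intro f g hf hg N
    apply Set.Finite.subset (Set.Finite.add (hf N) (hg N))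
    intro i hi
    by_contra h
    apply hi
    rw [MvPowerSeries.coeff_mul]
    apply Finset.dvd_sum
    intro p hp
    rw [Finset.HasAntidiagonal.mem_antidiagonal] at hp
    by_cases h1 : π ^ N ∣ MvPowerSeries.coeff p.1 f
    · exact Dvd.dvd.mul_right h1 _
    · by_cases h2 : π ^ N ∣ MvPowerSeries.coeff p.2 g
      · exact Dvd.dvd.mul_left h2 _
      · exact absurd (hp ▸ Set.add_mem_add h1 h2) h

/-- Tate monomials `π^a X^i`, identified with pairs `(a, i) ∈ ℕ × ℕ^n`. -/
abbrev TMon (n : ℕ) := ℕ × (Fin n →₀ ℕ)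

noncomputable def monMul (a b : TMon n) : TMon n := (a.1 + b.1, a.2 + b.2)
def monDvd (a b : TMon n) : Prop := a.1 ≤ b.1 ∧ a.2 ≤ b.2
noncomputable def monDiv (a b : TMon n) : TMon n := (a.1 - b.1, a.2 - b.2)
noncomputable def monLcm (a b : TMon n) : TMon n := (max a.1 b.1, a.2 ⊔ b.2)

/-- The valuation-first term order: compare valuations first (a *smaller* valuation gives a
*larger* term), then exponents via the monomial order `mo`. -/
def termLT (mo : MonomialOrder (Fin n)) (a b : TMon n) : Prop :=
  b.1 < a.1 ∨ (a.1 = b.1 ∧ mo.toSyn a.2 < mo.toSyn b.2)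

def termLE (mo : MonomialOrder (Fin n)) (a b : TMon n) : Prop :=
  a = b ∨ termLT mo a b

/-- Order on `Option (TMon n)`, where `none` (the "monomial" of `0`) is smallest. -/
def optLT (mo : MonomialOrder (Fin n)) : Option (TMon n) → Option (TMon n) → Prop
  | none, none => False
  | none, some _ => True
  | some _, none => False
  | some a, some b => termLT mo a b

def optLE (mo : MonomialOrder (Fin n)) (a b : Option (TMon n)) : Prop :=
  a = b ∨ optLT mo a b

noncomputable def optMul (t : TMon n) : Option (TMon n) → Option (TMon n)
  | none => none
  | some a => some (monMul t a)

/-- `(a, i)` is (the monomial of) a term of `f`: the coefficient of `X^i` has valuation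
exactly `a`. -/
def IsTerm (π : O) (f : MvPowerSeries (Fin n) O) (m : TMon n) : Prop :=
  π ^ m.1 ∣ MvPowerSeries.coeff m.2 f ∧ ¬ π ^ (m.1 + 1) ∣ MvPowerSeries.coeff m.2 f

/-- `m` is the leading monomial of `f`. -/
def IsLM (π : O) (mo : MonomialOrder (Fin n)) (f : MvPowerSeries (Fin n) O) (m : TMon n) :
    Prop :=
  IsTerm π f m ∧ ∀ m', IsTerm π f m' → termLE mo m' m

/-- `s` is the leading monomial of `f`, with the convention `LM 0 = none`. -/
def IsLMopt (π : O) (mo : MonomialOrder (Fin n)) (f : MvPowerSeries (Fin n) O) :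
    Option (TMon n) → Prop
  | none => f = 0
  | some m => IsLM π mo f m

/-- All coefficients of `f` are divisible by `π^N`, i.e. `val f ≥ N`. -/
def DvdAll (π : O) (N : ℕ) (f : MvPowerSeries (Fin n) O) : Prop :=
  ∀ i, π ^ N ∣ MvPowerSeries.coeff i f

/-- The Gauss valuation of `f` is exactly `N`. -/
def ValEq (π : O) (f : MvPowerSeries (Fin n) O) (N : ℕ) : Prop :=
  DvdAll π N f ∧ ¬ DvdAll π (N + 1) f

/-- `G` is a Gröbner basis of the ideal `I` of the (integral) Tate algebra. -/
def IsGB (π : O) (mo : MonomialOrder (Fin n)) (G : Set (TateAlgebra n O π))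
    (I : Ideal (TateAlgebra n O π)) : Prop :=
  (∀ g ∈ G, g ∈ I) ∧
    ∀ f ∈ I, (f : MvPowerSeries (Fin n) O) ≠ 0 → ∀ mf,
      IsLM π mo (f : MvPowerSeries (Fin n) O) mf →
        ∃ g ∈ G, ∃ mg, IsLM π mo (g : MvPowerSeries (Fin n) O) mg ∧ monDvd mg mf

/-- The module `M = {(u,v) : u f - v ∈ I₀}`. -/
def SigMod {π : O} (I0 : Ideal (TateAlgebra n O π)) (f : TateAlgebra n O π) :
    Set (TateAlgebra n O π × TateAlgebra n O π) :=
  {p | p.1 * f - p.2 ∈ I0}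

/-- `p = (u₁,v₁)` is top-reducible by `q = (u₂,v₂)`. -/
def TopRed (π : O) (mo : MonomialOrder (Fin n))
    (p q : TateAlgebra n O π × TateAlgebra n O π) : Prop :=
  (q.2 = 0 ∧ ∃ mu mq, IsLM π mo (p.1 : MvPowerSeries (Fin n) O) mu ∧
      IsLM π mo (q.1 : MvPowerSeries (Fin n) O) mq ∧ monDvd mq mu)
  ∨ (p.2 ≠ 0 ∧ q.2 ≠ 0 ∧
      ∃ m1 m2, IsLM π mo (p.2 : MvPowerSeries (Fin n) O) m1 ∧
        IsLM π mo (q.2 : MvPowerSeries (Fin n) O) m2 ∧ monDvd m2 m1 ∧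
        ∃ s1 s2, IsLMopt π mo (p.1 : MvPowerSeries (Fin n) O) s1 ∧
          IsLMopt π mo (q.1 : MvPowerSeries (Fin n) O) s2 ∧
          optLE mo (optMul (monDiv m1 m2) s2) s1)

/-- `G` is a strong Gröbner basis of the module `M = SigMod I0 f`. -/
def IsSGB (π : O) (mo : MonomialOrder (Fin n)) (I0 : Ideal (TateAlgebra n O π))
    (f : TateAlgebra n O π) (G : Set (TateAlgebra n O π × TateAlgebra n O π)) : Prop :=
  G.Finite ∧ G ⊆ SigMod I0 f ∧
    ∀ p ∈ SigMod I0 f, p ≠ 0 → ∃ q ∈ G, TopRed π mo p q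

/-- `p` is covered by `q`. -/
def Covers (π : O) (mo : MonomialOrder (Fin n))
    (q p : TateAlgebra n O π × TateAlgebra n O π) : Prop :=
  ∃ mu mq, IsLM π mo (p.1 : MvPowerSeries (Fin n) O) mu ∧
    IsLM π mo (q.1 : MvPowerSeries (Fin n) O) mq ∧ monDvd mq mu ∧
    ∃ sv sp, IsLMopt π mo (q.2 : MvPowerSeries (Fin n) O) sv ∧
      IsLMopt π mo (p.2 : MvPowerSeries (Fin n) O) sp ∧
      optLT mo (optMul (monDiv mu mq) sv) sp

def CoveredBy (π : O) (mo : MonomialOrder (Fin n))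
    (p : TateAlgebra n O π × TateAlgebra n O π)
    (G : Set (TateAlgebra n O π × TateAlgebra n O π)) : Prop :=
  ∃ q ∈ G, Covers π mo q p

/-- The Tate series `π^a X^i`, as an element of the Tate algebra. -/
noncomputable def monTA (π : O) (m : TMon n) : TateAlgebra n O π :=
  ⟨MvPowerSeries.monomial m.2 (π ^ m.1), by
    intro N
    apply Set.Finite.subset (Set.finite_singleton m.2)
    intro i hi
    by_contra h
    rw [Set.mem_singleton_iff] at h
    apply hi
    rw [MvPowerSeries.coeff_monomial, if_neg h]
    exact Dvd.intro 0 (by simp)⟩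

noncomputable def smulPair (π : O) (m : TMon n) (p : TateAlgebra n O π × TateAlgebra n O π) :
    TateAlgebra n O π × TateAlgebra n O π :=
  (monTA π m * p.1, monTA π m * p.2)

/-- `r` is the J-pair of `(p, q)` (with `p` carrying the larger signature part). -/
def IsJPair (π : O) (mo : MonomialOrder (Fin n))
    (p q r : TateAlgebra n O π × TateAlgebra n O π) : Prop :=
  ∃ m1 m2, IsLM π mo (p.2 : MvPowerSeries (Fin n) O) m1 ∧
    IsLM π mo (q.2 : MvPowerSeries (Fin n) O) m2 ∧
    (∃ s1 s2, IsLMopt π mo (p.1 : MvPowerSeries (Fin n) O) s1 ∧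
      IsLMopt π mo (q.1 : MvPowerSeries (Fin n) O) s2 ∧
      optLT mo (optMul (monDiv (monLcm m1 m2) m2) s2)
        (optMul (monDiv (monLcm m1 m2) m1) s1)) ∧
    r = smulPair π (monDiv (monLcm m1 m2) m1) p

section Residue

variable {k : Type*} [Field k]

/-- `P = ρ(f)`, the reduction mod `π` of `π^{-val f} f`. -/
def IsRho (π : O) (φ : O →+* k) (f : MvPowerSeries (Fin n) O)
    (P : MvPolynomial (Fin n) k) : Prop :=
  ∃ (N : ℕ) (g : MvPowerSeries (Fin n) O), f = (π ^ N) • g ∧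
    (∃ i, ¬ π ∣ MvPowerSeries.coeff i g) ∧
    ∀ i, MvPolynomial.coeff i P = φ (MvPowerSeries.coeff i g)

def rhoSet (π : O) (φ : O →+* k) (S : Set (TateAlgebra n O π)) :
    Set (MvPolynomial (Fin n) k) :=
  {P | ∃ f ∈ S, IsRho π φ (f : MvPowerSeries (Fin n) O) P}

/-- `Ī_N`: the image in `k[X]` of `π^{-N} (I ∩ π^N K{X}°)`. -/
def BarIdeal (π : O) (φ : O →+* k) (I : Ideal (TateAlgebra n O π)) (N : ℕ) :
    Set (MvPolynomial (Fin n) k) :=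
  {P | ∃ f ∈ I, ∃ g : MvPowerSeries (Fin n) O, (f : MvPowerSeries (Fin n) O) = (π ^ N) • g ∧
    ∀ i, MvPolynomial.coeff i P = φ (MvPowerSeries.coeff i g)}

/-- `d` is the leading exponent of the polynomial `P` for the monomial order `mo`. -/
def IsPolyLM (mo : MonomialOrder (Fin n)) (P : MvPolynomial (Fin n) k)
    (d : Fin n →₀ ℕ) : Prop :=
  MvPolynomial.coeff d P ≠ 0 ∧ ∀ e, MvPolynomial.coeff e P ≠ 0 → mo.toSyn e ≤ mo.toSyn d

/-- `G` is a Gröbner basis of the set (ideal) `J` of polynomials over the residue field. -/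
def IsPolyGB (mo : MonomialOrder (Fin n)) (G : Set (MvPolynomial (Fin n) k))
    (J : Set (MvPolynomial (Fin n) k)) : Prop :=
  G ⊆ J ∧ ∀ P ∈ J, P ≠ 0 → ∀ d, IsPolyLM mo P d →
    ∃ Q ∈ G, ∃ e, IsPolyLM mo Q e ∧ e ≤ d

end Residue

end TateStmt


open TateStmt MvPowerSeries

variable {n : ℕ} {O : Type*} [CommRing O] [IsDomain O] [IsDiscreteValuationRing O]

/-- The set `W` of nonzero pairs of `M = {(u,v) : u f - v ∈ I₀}` that are top-reducible by
no element of `G`. -/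
def WSet (π : O) (mo : MonomialOrder (Fin n)) (I0 : Ideal (TateAlgebra n O π))
    (f : TateAlgebra n O π) (G : Set (TateAlgebra n O π × TateAlgebra n O π)) :
    Set (TateAlgebra n O π × TateAlgebra n O π) :=
  {p | p ∈ SigMod I0 f ∧ p ≠ 0 ∧ ∀ q ∈ G, ¬ TopRed π mo p q}

/-!
If `(u, v) ∈ M` and the valuation of `LM u` exceeds that of `LM v`, then `u f - v ∈ I₀` has
the same leading monomial as `v`, so some `(0, g) ∈ G` top-reduces `(u, v)`. Hence on `W` the
valuation of `LM u` is at most that of `LM v`; in particular `u ≠ 0`, so `L` is nonempty, and the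
valuations occurring in `L` are bounded by `ν`. On terms of bounded valuation the valuation-first
order is the lexicographic order on `(ν - val, exponent)`, which is well-founded.
-/

namespace TateStmt

section Order

variable (mo : MonomialOrder (Fin n))

variable {mo} in
theorem fst_le_of_termLE {a b : TMon n} (h : termLE mo a b) : b.1 ≤ a.1 := by
  rcases h with rfl | h | h
  exacts [le_rfl, h.le, h.1.ge]

theorem termLE_of_fst_le {a b : TMon n} (h₁ : b.1 ≤ a.1)
    (h₂ : a.1 = b.1 → mo.toSyn a.2 ≤ mo.toSyn b.2) : termLE mo a b := by
  rcases h₁.lt_or_eq with h | h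
  · exact Or.inr (Or.inl h)
  rcases (h₂ h.symm).lt_or_eq with h' | h'
  · exact Or.inr (Or.inr ⟨h.symm, h'⟩)
  · exact Or.inl (Prod.ext h.symm (mo.toSyn.injective h'))

theorem exists_termLE_min {S : Set (TMon n)} (hS : S.Nonempty) {B : ℕ}
    (hB : ∀ s ∈ S, s.1 ≤ B) : ∃ m₀ ∈ S, ∀ m ∈ S, termLE mo m₀ m := by
  let rank : TMon n → ℕ ×ₗ mo.syn := fun s => toLex (B - s.1, mo.toSyn s.2)
  obtain ⟨m₀, hm₀, hmin⟩ := (InvImage.wf rank wellFounded_lt).has_min S hS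
  refine ⟨m₀, hm₀, fun m hm => ?_⟩
  have hle : rank m₀ ≤ rank m := not_lt.mp (hmin m hm)
  obtain ⟨h₁, h₂⟩ := Prod.Lex.toLex_le_toLex'.mp hle
  dsimp only at h₁ h₂
  have := hB m hm
  have := hB m₀ hm₀
  exact termLE_of_fst_le mo (by omega) fun h => h₂ (by omega)

variable {mo} in
theorem optLE_none_left (s : Option (TMon n)) : optLE mo none s := by
  cases s
  exacts [Or.inl rfl, Or.inr trivial]

end Order

section Valuation

variable {R : Type*} [CommRing R] {π : R} {N M : ℕ} {f g : MvPowerSeries (Fin n) R}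

theorem dvdAll_zero (N : ℕ) : DvdAll π N (0 : MvPowerSeries (Fin n) R) :=
  fun _ => by simp

theorem DvdAll.mono (h : DvdAll π M f) (hNM : N ≤ M) : DvdAll π N f :=
  fun i => (pow_dvd_pow π hNM).trans (h i)

theorem DvdAll.sub (hf : DvdAll π N f) (hg : DvdAll π N g) : DvdAll π N (f - g) :=
  fun i => by simpa only [map_sub] using dvd_sub (hf i) (hg i)

theorem DvdAll.mul_right (hf : DvdAll π N f) (g : MvPowerSeries (Fin n) R) :
    DvdAll π N (f * g) :=
  fun i => by
    rw [coeff_mul]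
    exact Finset.dvd_sum fun c _ => (hf c.1).mul_right _

theorem ValEq.ne_zero (h : ValEq π f N) : f ≠ 0 := by
  rintro rfl
  exact h.2 (dvdAll_zero _)

theorem IsTerm.ne_zero {m : TMon n} (h : IsTerm π f m) : f ≠ 0 := by
  rintro rfl
  exact h.2 (by simp)

theorem IsLM.ne_zero {mo : MonomialOrder (Fin n)} {m : TMon n} (h : IsLM π mo f m) : f ≠ 0 :=
  h.1.ne_zero

theorem IsTerm.le_of_dvdAll {m : TMon n} (hm : IsTerm π f m) (h : DvdAll π N f) : N ≤ m.1 := by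
  by_contra! hlt
  exact hm.2 ((pow_dvd_pow π hlt).trans (h m.2))

theorem exists_isLM_of_valEq (mo : MonomialOrder (Fin n)) (hT : IsTate π f) (hV : ValEq π f N) :
    ∃ m : TMon n, IsLM π mo f m ∧ m.1 = N := by
  let S := {i : Fin n →₀ ℕ | ¬ π ^ (N + 1) ∣ coeff i f}
  have hS : S.Nonempty := by
    by_contra hS
    exact hV.2 fun i => by_contra fun hi => hS ⟨i, hi⟩
  obtain ⟨i₀, hi₀, hmax⟩ := Set.exists_max_image S mo.toSyn (hT (N + 1)) hS
  refine ⟨(N, i₀), ⟨⟨hV.1 i₀, hi₀⟩, fun ⟨a, i⟩ hm => ?_⟩, rfl⟩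
  refine termLE_of_fst_le mo (hm.le_of_dvdAll hV.1) fun ha => hmax i ?_
  obtain rfl : a = N := ha
  exact hm.2

variable [IsDomain R] [WfDvdMonoid R]

theorem exists_isTerm_of_coeff_ne_zero (hπ : ¬IsUnit π) {i : Fin n →₀ ℕ}
    (hc : coeff i f ≠ 0) : ∃ a, IsTerm π f (a, i) :=
  ⟨multiplicity π (coeff i f), pow_multiplicity_dvd _ _,
    (FiniteMultiplicity.of_not_isUnit hπ hc).not_pow_dvd_of_multiplicity_lt (Nat.lt_succ_self _)⟩

theorem IsLM.dvdAll (hπ : ¬IsUnit π) {mo : MonomialOrder (Fin n)} {m : TMon n}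
    (h : IsLM π mo f m) : DvdAll π m.1 f := by
  intro i
  by_cases hc : coeff i f = 0
  · simp [hc]
  obtain ⟨a, ha⟩ := exists_isTerm_of_coeff_ne_zero hπ hc
  exact (pow_dvd_pow π (fst_le_of_termLE (h.2 _ ha))).trans ha.1

theorem exists_valEq_of_ne_zero (hπ : ¬IsUnit π) (hf : f ≠ 0) : ∃ N, ValEq π f N := by
  classical
  obtain ⟨i, hi⟩ : ∃ i, coeff i f ≠ 0 := by
    contrapose! hf
    exact MvPowerSeries.ext fun i => by simp [hf i]
  obtain ⟨a, ha⟩ := exists_isTerm_of_coeff_ne_zero hπ hi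
  have hex : ∃ N, ¬ DvdAll π (N + 1) f := ⟨a, fun h => ha.2 (h i)⟩
  refine ⟨Nat.find hex, ?_, Nat.find_spec hex⟩
  cases h : Nat.find hex with
  | zero => exact fun _ => by simp
  | succ k => exact not_not.mp (Nat.find_min hex (by omega))

theorem exists_isLMopt (mo : MonomialOrder (Fin n)) (hπ : ¬IsUnit π) (hT : IsTate π f) :
    ∃ s, IsLMopt π mo f s := by
  by_cases hf : f = 0
  · exact ⟨none, hf⟩
  obtain ⟨N, hN⟩ := exists_valEq_of_ne_zero hπ hf
  obtain ⟨m, hm, -⟩ := exists_isLM_of_valEq mo hT hN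
  exact ⟨some m, hm⟩

theorem isLM_sub_of_dvdAll (hπ : ¬IsUnit π) {mo : MonomialOrder (Fin n)} {m : TMon n}
    (hg : IsLM π mo g m) (hf : DvdAll π (m.1 + 1) f) : IsLM π mo (f - g) m := by
  have hg' := hg.dvdAll hπ
  have hfg : DvdAll π m.1 (f - g) := (hf.mono m.1.le_succ).sub hg'
  have hterm : ∀ i, IsTerm π (f - g) (m.1, i) ↔ IsTerm π g (m.1, i) := fun i => by
    simp only [IsTerm]
    rw [and_iff_right (hfg i), and_iff_right (hg' i), map_sub, dvd_sub_right (hf i)]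
  refine ⟨(hterm m.2).mpr hg.1, fun ⟨a, i⟩ hm => ?_⟩
  rcases (hm.le_of_dvdAll hfg).lt_or_eq with hlt | rfl
  · exact Or.inr (Or.inl hlt)
  · exact hg.2 _ ((hterm i).mp hm)

theorem exists_topRed_of_dvdAll_mul (hπ : ¬IsUnit π) {mo : MonomialOrder (Fin n)}
    {I0 : Ideal (TateAlgebra n R π)} {f : TateAlgebra n R π}
    {G : Set (TateAlgebra n R π × TateAlgebra n R π)}
    (hG0 : IsGB π mo {g : TateAlgebra n R π | ((0 : TateAlgebra n R π), g) ∈ G} I0)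
    {p : TateAlgebra n R π × TateAlgebra n R π} (hp : p ∈ SigMod I0 f) {m : TMon n}
    (hv : IsLM π mo (p.2 : MvPowerSeries (Fin n) R) m)
    (huf : DvdAll π (m.1 + 1)
      ((p.1 : MvPowerSeries (Fin n) R) * (f : MvPowerSeries (Fin n) R))) :
    ∃ q ∈ G, TopRed π mo p q := by
  have hw : IsLM π mo ((p.1 * f - p.2 : TateAlgebra n R π) : MvPowerSeries (Fin n) R) m :=
    isLM_sub_of_dvdAll hπ hv huf
  obtain ⟨g, hgG, mg, hg, hdvd⟩ := hG0.2 _ hp hw.ne_zero m hw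
  obtain ⟨s, hs⟩ := exists_isLMopt mo hπ p.1.2
  refine ⟨(0, g), hgG, Or.inr ⟨fun h => hv.ne_zero (congrArg Subtype.val h),
    fun h => hg.ne_zero (congrArg Subtype.val h), m, mg, hv, hg, hdvd,
    s, none, hs, rfl, optLE_none_left s⟩⟩

end Valuation

end TateStmt

section WSet

variable {π : O} {mo : MonomialOrder (Fin n)} {I0 : Ideal (TateAlgebra n O π)}
  {f : TateAlgebra n O π} {G : Set (TateAlgebra n O π × TateAlgebra n O π)}
  {p : TateAlgebra n O π × TateAlgebra n O π} {mv : TMon n}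

theorem fst_le_of_mem_wSet (hπ : ¬IsUnit π)
    (hG0 : IsGB π mo {g : TateAlgebra n O π | ((0 : TateAlgebra n O π), g) ∈ G} I0)
    (hp : p ∈ WSet π mo I0 f G) (hv : IsLM π mo (p.2 : MvPowerSeries (Fin n) O) mv)
    {s : TMon n} (hu : IsLM π mo (p.1 : MvPowerSeries (Fin n) O) s) : s.1 ≤ mv.1 := by
  by_contra! hlt
  obtain ⟨q, hq, hred⟩ :=
    exists_topRed_of_dvdAll_mul hπ hG0 hp.1 hv (((hu.dvdAll hπ).mono hlt).mul_right _)
  exact hp.2.2 q hq hred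

theorem exists_isLM_fst_of_mem_wSet (hπ : ¬IsUnit π)
    (hG0 : IsGB π mo {g : TateAlgebra n O π | ((0 : TateAlgebra n O π), g) ∈ G} I0)
    (hp : p ∈ WSet π mo I0 f G) (hv : IsLM π mo (p.2 : MvPowerSeries (Fin n) O) mv) :
    ∃ s, IsLM π mo (p.1 : MvPowerSeries (Fin n) O) s := by
  obtain ⟨_ | s, hs⟩ := exists_isLMopt mo hπ p.1.2
  · have hu : (p.1 : MvPowerSeries (Fin n) O) = 0 := hs
    obtain ⟨q, hq, hred⟩ :=
      exists_topRed_of_dvdAll_mul hπ hG0 hp.1 hv (by rw [hu, zero_mul]; exact dvdAll_zero _)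
    exact (hp.2.2 q hq hred).elim
  · exact ⟨s, hs⟩

end WSet

theorem statement_10_general (π : O) (hπ : Irreducible π) (mo : MonomialOrder (Fin n))
    (I0 : Ideal (TateAlgebra n O π)) (f : TateAlgebra n O π)
    (G : Set (TateAlgebra n O π × TateAlgebra n O π))
    (hG0 : IsGB π mo {g : TateAlgebra n O π | ((0 : TateAlgebra n O π), g) ∈ G} I0)
    (ν : ℕ)
    (hν₁ : ∃ p ∈ WSet π mo I0 f G, ValEq π (p.2 : MvPowerSeries (Fin n) O) ν) :
    ∃ m0 ∈ {s : TMon n | ∃ p ∈ WSet π mo I0 f G,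
        (∃ mv, IsLM π mo (p.2 : MvPowerSeries (Fin n) O) mv ∧ mv.1 = ν) ∧
        IsLM π mo (p.1 : MvPowerSeries (Fin n) O) s},
      ∀ m ∈ {s : TMon n | ∃ p ∈ WSet π mo I0 f G,
        (∃ mv, IsLM π mo (p.2 : MvPowerSeries (Fin n) O) mv ∧ mv.1 = ν) ∧
        IsLM π mo (p.1 : MvPowerSeries (Fin n) O) s},
      termLE mo m0 m := by
  obtain ⟨p, hpW, hpν⟩ := hν₁
  obtain ⟨mv, hmv, hmvν⟩ := exists_isLM_of_valEq mo p.2.2 hpν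
  obtain ⟨s, hs⟩ := exists_isLM_fst_of_mem_wSet hπ.not_isUnit hG0 hpW hmv
  refine exists_termLE_min mo (B := ν) ⟨s, p, hpW, ⟨mv, hmv, hmvν⟩, hs⟩ ?_
  rintro s ⟨q, hqW, ⟨mv', hmv', rfl⟩, hs'⟩
  exact fst_le_of_mem_wSet hπ.not_isUnit hG0 hqW hmv' hs'

/-- if `W` is nonempty and `ν < +∞` is the minimal valuation `val v` over
`(u,v) ∈ W`, then `L = {LM(u) : (u,v) ∈ W, val(LM(v)) = ν}` admits a minimal element for
the term order. -/
theorem statement_10 (π : O) (hπ : Irreducible π) (mo : MonomialOrder (Fin n))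
    (I0 : Ideal (TateAlgebra n O π)) (f : TateAlgebra n O π)
    (G : Set (TateAlgebra n O π × TateAlgebra n O π))
    (hfin : G.Finite) (hGM : G ⊆ SigMod I0 f)
    (h1f : ((1 : TateAlgebra n O π), f) ∈ G)
    (hG0 : IsGB π mo {g : TateAlgebra n O π | ((0 : TateAlgebra n O π), g) ∈ G} I0)
    (ν : ℕ)
    (hν₁ : ∃ p ∈ WSet π mo I0 f G, ValEq π (p.2 : MvPowerSeries (Fin n) O) ν)
    (hν₂ : ∀ p ∈ WSet π mo I0 f G, ∀ ν',
      ValEq π (p.2 : MvPowerSeries (Fin n) O) ν' → ν ≤ ν') :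
    ∃ m0 ∈ {s : TMon n | ∃ p ∈ WSet π mo I0 f G,
        (∃ mv, IsLM π mo (p.2 : MvPowerSeries (Fin n) O) mv ∧ mv.1 = ν) ∧
        IsLM π mo (p.1 : MvPowerSeries (Fin n) O) s},
      ∀ m ∈ {s : TMon n | ∃ p ∈ WSet π mo I0 f G,
        (∃ mv, IsLM π mo (p.2 : MvPowerSeries (Fin n) O) mv ∧ mv.1 = ν) ∧
        IsLM π mo (p.1 : MvPowerSeries (Fin n) O) s},
      termLE mo m0 m :=
  statement_10_general π hπ mo I0 f G hG0 ν hν₁
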